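/- arXiv:0705.1094 — 2 statements merged into one kernel-verified Lean document; each statement's English description precedes it below -/
import Mathlib

section
/- Let {Aᵢ}ᵢ₌₁ⁿ be disjoint annuli in ℝ², Aᵢ = {rᵢ < |x − cᵢ| ≤ sᵢ}, and let f(x) = Σᵢ χ_{Aᵢ}(x) vᵢ(x) aᵢ/|x − cᵢ| where each vᵢ : Aᵢ → ℝᵏ satisfies |vᵢ| = 1 and aᵢ ∈ ℝ are constants. Writing τᵢ = log(sᵢ/rᵢ), for every t > 0 one has t² λ_f(t) ≤ π Σᵢ aᵢ² (1 − e^{−2τᵢ}). -/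
/-!
On the annulus `Aᵢ` the function has norm `|aᵢ| / |x - cᵢ|`, so `{|f| > t} ∩ Aᵢ` lies in
the annulus `rᵢ < |x - cᵢ| ≤ mᵢ` with `mᵢ = min sᵢ (|aᵢ| / t)`, of area `π (mᵢ² - rᵢ²)`.
Since `t mᵢ ≤ |aᵢ|` and `mᵢ ≤ sᵢ`,
`t² (mᵢ² - rᵢ²) = (t mᵢ)² (1 - (rᵢ/mᵢ)²) ≤ aᵢ² (1 - (rᵢ/sᵢ)²)`, and `(rᵢ/sᵢ)² = e^{-2τᵢ}`.
Summing over the disjoint annuli gives the estimate.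
-/

open MeasureTheory Metric
open scoped ENNReal

def annulus {X : Type*} [PseudoMetricSpace X] (c : X) (r s : ℝ) : Set X :=
  {x | r < dist x c ∧ dist x c ≤ s}

lemma setOf_lt_norm_sum_indicator_subset {ι α E : Type*} [Fintype ι] [SeminormedAddCommGroup E]
    {A : ι → Set α} (hA : Pairwise (Function.onFun Disjoint A)) (g : ι → α → E) {t : ℝ}
    (ht : 0 ≤ t) :
    {x | t < ‖∑ i, (A i).indicator (g i) x‖} ⊆ ⋃ i, A i ∩ {x | t < ‖g i x‖} := by
  intro x hx
  by_cases hmem : ∃ i, x ∈ A i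
  · obtain ⟨i, hi⟩ := hmem
    have hsum : ∑ j, (A j).indicator (g j) x = g i x := by
      rw [Finset.sum_eq_single_of_mem i (Finset.mem_univ i)
        fun j _ hj => Set.indicator_of_notMem (Set.disjoint_right.mp (hA hj) hi) _]
      exact Set.indicator_of_mem hi _
    exact Set.mem_iUnion.mpr ⟨i, hi, by simpa only [Set.mem_ofPred_eq, hsum] using hx⟩
  · push Not at hmem
    have hsum : ∑ j, (A j).indicator (g j) x = 0 :=
      Finset.sum_eq_zero fun j _ => Set.indicator_of_notMem (hmem j) _
    simp only [Set.mem_ofPred_eq, hsum, norm_zero] at hx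
    exact absurd hx (not_lt.mpr ht)

lemma volume_closedBall_diff_closedBall_fin_two (c : EuclideanSpace ℝ (Fin 2)) {r m : ℝ}
    (hr : 0 ≤ r) (hrm : r ≤ m) :
    volume (closedBall c m \ closedBall c r) = ENNReal.ofReal (Real.pi * (m ^ 2 - r ^ 2)) := by
  rw [measure_sdiff (closedBall_subset_closedBall hrm) measurableSet_closedBall.nullMeasurableSet
      measure_closedBall_lt_top.ne, EuclideanSpace.volume_closedBall_fin_two,
    EuclideanSpace.volume_closedBall_fin_two, ← ENNReal.ofReal_pow hr,
    ← ENNReal.ofReal_pow (hr.trans hrm), ← ENNReal.ofReal_mul (by positivity),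
    ← ENNReal.ofReal_mul (by positivity), ← ENNReal.ofReal_sub _ (by positivity)]
  ring_nf

lemma annulus_inter_setOf_lt_norm_smul_subset {F : Type*} [SeminormedAddCommGroup F]
    [NormedSpace ℝ F] {X : Type*} [PseudoMetricSpace X] {c : X} {r s : ℝ} (hr : 0 ≤ r)
    (a : ℝ) {u : X → F} (hu : ∀ x ∈ annulus c r s, ‖u x‖ = 1) {t : ℝ} (ht : 0 < t) :
    annulus c r s ∩ {x | t < ‖(a / dist x c) • u x‖} ⊆
      closedBall c (min s (|a| / t)) \ closedBall c r := by
  rintro x ⟨hx, hlt⟩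
  have hd : 0 < dist x c := hr.trans_lt hx.1
  rw [Set.mem_ofPred_eq, norm_smul, hu x hx, mul_one, Real.norm_eq_abs, abs_div,
    abs_of_pos hd, lt_div_iff₀ hd] at hlt
  refine ⟨mem_closedBall.mpr (le_min hx.2 ?_), fun h => (mem_closedBall.mp h).not_gt hx.1⟩
  rw [le_div_iff₀ ht]
  linarith

lemma sq_mul_sub_sq_le {r m s t a : ℝ} (hr : 0 ≤ r) (hrm : r < m) (hms : m ≤ s) (ht : 0 ≤ t)
    (htm : t * m ≤ |a|) :
    t ^ 2 * (m ^ 2 - r ^ 2) ≤ a ^ 2 * (1 - (r / s) ^ 2) := by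
  have hm : 0 < m := hr.trans_lt hrm
  have hsq : (t * m) ^ 2 ≤ a ^ 2 := sq_abs a ▸ pow_le_pow_left₀ (by positivity) htm 2
  have hratio : (r / s) ^ 2 ≤ (r / m) ^ 2 :=
    pow_le_pow_left₀ (div_nonneg hr (hm.le.trans hms)) (div_le_div_of_nonneg_left hr hm hms) 2
  have hm_ratio : 0 ≤ 1 - (r / m) ^ 2 := by
    rw [sub_nonneg, div_pow, div_le_one (by positivity)]
    exact pow_le_pow_left₀ hr hrm.le 2
  calc t ^ 2 * (m ^ 2 - r ^ 2) = (t * m) ^ 2 * (1 - (r / m) ^ 2) := by field_simp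
    _ ≤ a ^ 2 * (1 - (r / s) ^ 2) := mul_le_mul hsq (by linarith) hm_ratio (sq_nonneg a)

lemma ofReal_sq_mul_volume_annulus_inter_le {F : Type*} [SeminormedAddCommGroup F]
    [NormedSpace ℝ F] (c : EuclideanSpace ℝ (Fin 2)) {r s : ℝ} (hr : 0 ≤ r) (a : ℝ)
    {u : EuclideanSpace ℝ (Fin 2) → F} (hu : ∀ x ∈ annulus c r s, ‖u x‖ = 1) {t : ℝ}
    (ht : 0 < t) :
    ENNReal.ofReal (t ^ 2) * volume (annulus c r s ∩ {x | t < ‖(a / dist x c) • u x‖}) ≤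
      ENNReal.ofReal (Real.pi * (a ^ 2 * (1 - (r / s) ^ 2))) := by
  set m := min s (|a| / t)
  have hsub := annulus_inter_setOf_lt_norm_smul_subset hr a hu ht
  rcases le_or_gt m r with hmr | hrm
  · rw [Set.sdiff_eq_empty.mpr (closedBall_subset_closedBall hmr), Set.subset_empty_iff] at hsub
    simp [hsub]
  have htm : t * m ≤ |a| := (le_div_iff₀' ht).mp (min_le_right _ _)
  calc ENNReal.ofReal (t ^ 2) * volume (annulus c r s ∩ {x | t < ‖(a / dist x c) • u x‖})
      ≤ ENNReal.ofReal (t ^ 2) * ENNReal.ofReal (Real.pi * (m ^ 2 - r ^ 2)) := by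
        rw [← volume_closedBall_diff_closedBall_fin_two c hr hrm.le]
        gcongr
    _ = ENNReal.ofReal (Real.pi * (t ^ 2 * (m ^ 2 - r ^ 2))) := by
        rw [← ENNReal.ofReal_mul (by positivity), mul_left_comm]
    _ ≤ ENNReal.ofReal (Real.pi * (a ^ 2 * (1 - (r / s) ^ 2))) := by
        exact ENNReal.ofReal_le_ofReal <| mul_le_mul_of_nonneg_left
          (sq_mul_sub_sq_le hr hrm (min_le_left _ _) ht.le htm) Real.pi_pos.le

lemma exp_neg_two_mul_log_div {r s : ℝ} (hr : 0 < r) (hs : 0 < s) :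
    Real.exp (-2 * Real.log (s / r)) = (r / s) ^ 2 := by
  rw [← inv_div, Real.log_inv, neg_mul_neg, mul_comm, Real.exp_mul, Real.exp_log (div_pos hr hs),
    Real.rpow_two]

theorem annuli_distribution_estimate {n k : ℕ}
    (c : Fin n → EuclideanSpace ℝ (Fin 2)) (r s a : Fin n → ℝ)
    (v : Fin n → EuclideanSpace ℝ (Fin 2) → EuclideanSpace ℝ (Fin k))
    (hr : ∀ i, 0 < r i) (hrs : ∀ i, r i < s i)
    (hdisj : Pairwise (Function.onFun Disjoint
      (fun i => {x : EuclideanSpace ℝ (Fin 2) | r i < dist x (c i) ∧ dist x (c i) ≤ s i})))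
    (hv : ∀ i, ∀ x ∈ {x : EuclideanSpace ℝ (Fin 2) |
        r i < dist x (c i) ∧ dist x (c i) ≤ s i}, ‖v i x‖ = 1)
    (f : EuclideanSpace ℝ (Fin 2) → EuclideanSpace ℝ (Fin k))
    (hf : f = fun x => ∑ i, Set.indicator
        {y : EuclideanSpace ℝ (Fin 2) | r i < dist y (c i) ∧ dist y (c i) ≤ s i}
        (fun y => (a i / dist y (c i)) • v i y) x) :
    ∀ t : ℝ, 0 < t →
      ENNReal.ofReal (t ^ 2) * volume {x | t < ‖f x‖} ≤
        ENNReal.ofReal (Real.pi * ∑ i, (a i) ^ 2 *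
          (1 - Real.exp (-2 * Real.log (s i / r i)))) := by
  intro t ht
  set A := fun i => annulus (c i) (r i) (s i)
  have hs i : 0 < s i := (hr i).trans (hrs i)
  have hlevel : {x | t < ‖f x‖} ⊆ ⋃ i, A i ∩ {x | t < ‖(a i / dist x (c i)) • v i x‖} :=
    hf ▸ setOf_lt_norm_sum_indicator_subset hdisj _ ht.le
  calc ENNReal.ofReal (t ^ 2) * volume {x | t < ‖f x‖}
      ≤ ∑ i, ENNReal.ofReal (t ^ 2) *
          volume (A i ∩ {x | t < ‖(a i / dist x (c i)) • v i x‖}) := by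
        rw [← Finset.mul_sum]
        gcongr
        exact (measure_mono hlevel).trans (measure_iUnion_fintype_le _ _)
    _ ≤ ∑ i, ENNReal.ofReal (Real.pi * (a i ^ 2 * (1 - (r i / s i) ^ 2))) :=
        Finset.sum_le_sum fun i _ =>
          ofReal_sq_mul_volume_annulus_inter_le (c i) (hr i).le (a i) (hv i) ht
    _ = _ := by
        have hterm i : 0 ≤ Real.pi * (a i ^ 2 * (1 - (r i / s i) ^ 2)) := by
          have : (r i / s i) ^ 2 ≤ 1 :=
            pow_le_one₀ (div_pos (hr i) (hs i)).le ((div_le_one (hs i)).mpr (hrs i).le)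
          exact mul_nonneg Real.pi_pos.le (mul_nonneg (sq_nonneg _) (sub_nonneg.mpr this))
        rw [← ENNReal.ofReal_sum_of_nonneg fun i _ => hterm i, Finset.mul_sum]
        simp_rw [exp_neg_two_mul_log_div (hr _) (hs _)]
end

section
/- For Ω ⊂ ℝ² open and compact ω ⊂ Ω define r_Ω(ω) = sup{ r(K ∩ ω) : K ⊂ Ω compact, ∂K ∩ ω = ∅ }, where r(·) is the infimum of total radii of finite ball-coverings. Then for compact sets ω₁, ω₂ ⊂ Ω: r_Ω(ω₁ ∪ ω₂) ≤ r_Ω(ω₁) + r_Ω(ω₂). -/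
open Metric

/-- The radius of a set: the infimum of total radii of finite coverings by closed balls. -/
noncomputable def setRadius (ω : Set (EuclideanSpace ℝ (Fin 2))) : ℝ :=
  sInf {t : ℝ | ∃ (n : ℕ) (c : Fin n → EuclideanSpace ℝ (Fin 2)) (ρ : Fin n → ℝ),
    (∀ i, 0 ≤ ρ i) ∧ ω ⊆ (⋃ i, closedBall (c i) (ρ i)) ∧ t = ∑ i, ρ i}

/-- The modified radius of `ω` relative to the open set `Ω`. -/
noncomputable def setRadiusIn (Ω ω : Set (EuclideanSpace ℝ (Fin 2))) : ℝ :=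
  sSup {t : ℝ | ∃ K : Set (EuclideanSpace ℝ (Fin 2)),
    K ⊆ Ω ∧ IsCompact K ∧ frontier K ∩ ω = ∅ ∧ t = setRadius (K ∩ ω)}

/-!
Covers of `A` and of `B` concatenate to a cover of `A ∪ B`, so `r` is subadditive on bounded
sets. A compact `K` whose frontier misses `ω₁ ∪ ω₂` is admissible for `ω₁` and for `ω₂`
separately, and `K ∩ (ω₁ ∪ ω₂) = (K ∩ ω₁) ∪ (K ∩ ω₂)`, so subadditivity of `r` bounds every term
of the supremum defining `r_Ω(ω₁ ∪ ω₂)`.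
-/

namespace SetRadius

open scoped Pointwise

local notation "E" => EuclideanSpace ℝ (Fin 2)

def coverRadii (ω : Set E) : Set ℝ :=
  {t : ℝ | ∃ (n : ℕ) (c : Fin n → E) (ρ : Fin n → ℝ),
    (∀ i, 0 ≤ ρ i) ∧ ω ⊆ (⋃ i, closedBall (c i) (ρ i)) ∧ t = ∑ i, ρ i}

lemma setRadius_eq_sInf_coverRadii (ω : Set E) : setRadius ω = sInf (coverRadii ω) := rfl

lemma nonneg_of_mem_coverRadii {ω : Set E} {t : ℝ} (ht : t ∈ coverRadii ω) : 0 ≤ t := by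
  obtain ⟨n, c, ρ, hρ, -, rfl⟩ := ht
  exact Finset.sum_nonneg fun i _ => hρ i

lemma coverRadii_bddBelow (ω : Set E) : BddBelow (coverRadii ω) :=
  ⟨0, fun _ => nonneg_of_mem_coverRadii⟩

lemma coverRadii_nonempty {ω : Set E} (hω : Bornology.IsBounded ω) :
    (coverRadii ω).Nonempty := by
  obtain ⟨r, hr⟩ := hω.subset_closedBall (0 : E)
  refine ⟨max r 0, 1, fun _ => 0, fun _ => max r 0, fun _ => le_max_right _ _, ?_, by simp⟩
  exact fun x hx => Set.mem_iUnion.2 ⟨0, closedBall_subset_closedBall (le_max_left _ _) (hr hx)⟩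

lemma coverRadii_anti {A B : Set E} (h : A ⊆ B) : coverRadii B ⊆ coverRadii A := by
  rintro t ⟨n, c, ρ, hρ, hc, rfl⟩
  exact ⟨n, c, ρ, hρ, h.trans hc, rfl⟩

lemma add_coverRadii_subset_union (A B : Set E) :
    coverRadii A + coverRadii B ⊆ coverRadii (A ∪ B) := by
  rintro _ ⟨_, ⟨n, c, ρ, hρ, hc, rfl⟩, _, ⟨m, d, σ, hσ, hd, rfl⟩, rfl⟩
  refine ⟨n + m, Fin.append c d, Fin.append ρ σ, ?_, ?_, by simp [Fin.sum_univ_add]⟩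
  · exact (Fin.forall_fin_add _).2 ⟨by simpa using hρ, by simpa using hσ⟩
  · rintro x (hx | hx)
    · obtain ⟨i, hi⟩ := Set.mem_iUnion.1 (hc hx)
      exact Set.mem_iUnion.2 ⟨Fin.castAdd m i, by simpa using hi⟩
    · obtain ⟨i, hi⟩ := Set.mem_iUnion.1 (hd hx)
      exact Set.mem_iUnion.2 ⟨Fin.natAdd n i, by simpa using hi⟩

lemma setRadius_nonneg (ω : Set E) : 0 ≤ setRadius ω :=
  Real.sInf_nonneg fun _ => nonneg_of_mem_coverRadii

lemma setRadius_mono {A B : Set E} (h : A ⊆ B) (hB : Bornology.IsBounded B) :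
    setRadius A ≤ setRadius B :=
  csInf_le_csInf (coverRadii_bddBelow A) (coverRadii_nonempty hB) (coverRadii_anti h)

lemma setRadius_union_le {A B : Set E} (hA : Bornology.IsBounded A)
    (hB : Bornology.IsBounded B) : setRadius (A ∪ B) ≤ setRadius A + setRadius B := by
  rw [setRadius_eq_sInf_coverRadii, setRadius_eq_sInf_coverRadii, setRadius_eq_sInf_coverRadii,
    ← csInf_add (coverRadii_nonempty hA) (coverRadii_bddBelow A) (coverRadii_nonempty hB)
      (coverRadii_bddBelow B)]
  exact csInf_le_csInf (coverRadii_bddBelow _)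
    ((coverRadii_nonempty hA).add (coverRadii_nonempty hB)) (add_coverRadii_subset_union A B)

def admissibleRadii (Ω ω : Set E) : Set ℝ :=
  {t : ℝ | ∃ K : Set E, K ⊆ Ω ∧ IsCompact K ∧ frontier K ∩ ω = ∅ ∧ t = setRadius (K ∩ ω)}

lemma setRadiusIn_eq_sSup_admissibleRadii (Ω ω : Set E) :
    setRadiusIn Ω ω = sSup (admissibleRadii Ω ω) := rfl

lemma admissibleRadii_bddAbove (Ω : Set E) {ω : Set E} (hω : Bornology.IsBounded ω) :
    BddAbove (admissibleRadii Ω ω) := by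
  refine ⟨setRadius ω, ?_⟩
  rintro _ ⟨K, -, -, -, rfl⟩
  exact setRadius_mono Set.inter_subset_right hω

lemma setRadius_inter_le_setRadiusIn {Ω ω K : Set E} (hω : Bornology.IsBounded ω)
    (hKΩ : K ⊆ Ω) (hK : IsCompact K) (hKω : frontier K ∩ ω = ∅) :
    setRadius (K ∩ ω) ≤ setRadiusIn Ω ω :=
  le_csSup (admissibleRadii_bddAbove Ω hω) ⟨K, hKΩ, hK, hKω, rfl⟩

lemma setRadiusIn_nonneg (Ω : Set E) {ω : Set E} (hω : Bornology.IsBounded ω) :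
    0 ≤ setRadiusIn Ω ω :=
  (setRadius_nonneg _).trans <|
    setRadius_inter_le_setRadiusIn hω (Set.empty_subset Ω) isCompact_empty (by simp)

end SetRadius

open SetRadius in
theorem setRadiusIn_union_le_general (Ω ω₁ ω₂ : Set (EuclideanSpace ℝ (Fin 2)))
    (h₁ : IsCompact ω₁) (h₂ : IsCompact ω₂) :
    setRadiusIn Ω (ω₁ ∪ ω₂) ≤ setRadiusIn Ω ω₁ + setRadiusIn Ω ω₂ := by
  refine Real.sSup_le ?_ (add_nonneg (setRadiusIn_nonneg Ω h₁.isBounded)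
    (setRadiusIn_nonneg Ω h₂.isBounded))
  rintro _ ⟨K, hKΩ, hK, hKω, rfl⟩
  rw [Set.inter_union_distrib_left, Set.union_empty_iff] at hKω
  obtain ⟨hKω₁, hKω₂⟩ := hKω
  rw [Set.inter_union_distrib_left]
  calc setRadius ((K ∩ ω₁) ∪ (K ∩ ω₂))
      ≤ setRadius (K ∩ ω₁) + setRadius (K ∩ ω₂) :=
        setRadius_union_le (h₁.isBounded.subset Set.inter_subset_right)
          (h₂.isBounded.subset Set.inter_subset_right)
    _ ≤ setRadiusIn Ω ω₁ + setRadiusIn Ω ω₂ :=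
        add_le_add (setRadius_inter_le_setRadiusIn h₁.isBounded hKΩ hK hKω₁)
          (setRadius_inter_le_setRadiusIn h₂.isBounded hKΩ hK hKω₂)

theorem setRadiusIn_union_le (Ω ω₁ ω₂ : Set (EuclideanSpace ℝ (Fin 2)))
    (hΩ : IsOpen Ω) (h₁ : IsCompact ω₁) (h₂ : IsCompact ω₂)
    (h₁Ω : ω₁ ⊆ Ω) (h₂Ω : ω₂ ⊆ Ω) :
    setRadiusIn Ω (ω₁ ∪ ω₂) ≤ setRadiusIn Ω ω₁ + setRadiusIn Ω ω₂ :=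
  setRadiusIn_union_le_general Ω ω₁ ω₂ h₁ h₂
end
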